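/- arXiv:1810.05517 — 4 statements merged into one kernel-verified Lean document; each statement's English description precedes it below -/
import Mathlib

section
/- Let n = 6 and consider the cyclic sequence A_1,...,A_12 of subsets of [6]: 24, 245, 25, 235, 35, 135, 1356, 136, 1346, 146, 1246, 246 (e.g. A_1 = {2,4}, A_12 = {2,4,6}). Then |A_{i−1} △ A_i| = 1 for all i (indices mod 12), and consequently any two sets among {A_1, A_5, A_9} = {{2,4},{3,5},{1,3,4,6}} are 3-separated. -/
open Finset

/-- An "alternating violation": a strictly increasing sequence
`i₀ < i₁ < ⋯ < i_{r+1}` of elements of `[n] = {1,…,n}` whose even-indexed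
elements lie in one of `A \ B`, `B \ A` and odd-indexed elements in the other. -/
def AltViol (n r : ℕ) (A B : Finset ℕ) : Prop :=
  ∃ f : Fin (r + 2) → ℕ, StrictMono f ∧ (∀ k, f k ∈ Finset.Icc 1 n) ∧
    (((∀ k : Fin (r + 2), (k : ℕ) % 2 = 0 → f k ∈ A \ B) ∧
      (∀ k : Fin (r + 2), (k : ℕ) % 2 = 1 → f k ∈ B \ A)) ∨
     ((∀ k : Fin (r + 2), (k : ℕ) % 2 = 0 → f k ∈ B \ A) ∧
      (∀ k : Fin (r + 2), (k : ℕ) % 2 = 1 → f k ∈ A \ B)))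

/-- `A` and `B` are `r`-separated (as subsets of `[n]`). -/
def RSep (n r : ℕ) (A B : Finset ℕ) : Prop := ¬ AltViol n r A B

/-- A collection is `r`-separated if any two of its members are. -/
def RSepColl (n r : ℕ) (S : Finset (Finset ℕ)) : Prop :=
  ∀ A ∈ S, ∀ B ∈ S, RSep n r A B

/-- `X` is the union of at most `k` intervals (a `k`-pieced cortege). -/
def IsCortege (k : ℕ) (X : Finset ℕ) : Prop :=
  ∃ s : Finset (ℕ × ℕ), s.card ≤ k ∧ X = s.biUnion fun p => Finset.Icc p.1 p.2

/-- `S` is an inclusion-wise maximal `r`-separated collection in `2^[n]`. -/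
def MaxSep (n r : ℕ) (S : Finset (Finset ℕ)) : Prop :=
  (∀ X ∈ S, X ⊆ Finset.Icc 1 n) ∧ RSepColl n r S ∧
    ∀ B ⊆ Finset.Icc 1 n, B ∉ S → ¬ RSepColl n r (insert B S)

lemma no3 (S : Finset ℕ) (hS : S.card ≤ 2) (f : Fin 5 → ℕ) (hf : StrictMono f)
    (g0 : f 0 ∈ S) (g2 : f 2 ∈ S) (g4 : f 4 ∈ S) : False := by
  have h02 : f 0 < f 2 := hf (by decide)
  have h24 : f 2 < f 4 := hf (by decide)
  have hsub : ({f 0, f 2, f 4} : Finset ℕ) ⊆ S := by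
    intro x hx; simp only [mem_insert, mem_singleton] at hx
    rcases hx with rfl|rfl|rfl <;> assumption
  have hc : ({f 0, f 2, f 4} : Finset ℕ).card = 3 := by
    rw [card_insert_of_notMem (by simp; omega), card_insert_of_notMem (by simp; omega),
      card_singleton]
  have := Finset.card_le_card hsub; omega

lemma no2 (S : Finset ℕ) (hS : S.card ≤ 1) (f : Fin 5 → ℕ) (hf : StrictMono f)
    (g1 : f 1 ∈ S) (g3 : f 3 ∈ S) : False := by
  have h13 : f 1 < f 3 := hf (by decide)
  have hsub : ({f 1, f 3} : Finset ℕ) ⊆ S := by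
    intro x hx; simp only [mem_insert, mem_singleton] at hx
    rcases hx with rfl|rfl <;> assumption
  have hc : ({f 1, f 3} : Finset ℕ).card = 2 := by
    rw [card_insert_of_notMem (by simp; omega), card_singleton]
  have := Finset.card_le_card hsub; omega

theorem stmt8 (A : Fin 12 → Finset ℕ)
    (h1 : A 0 = {2, 4}) (h2 : A 1 = {2, 4, 5}) (h3 : A 2 = {2, 5})
    (h4 : A 3 = {2, 3, 5}) (h5 : A 4 = {3, 5}) (h6 : A 5 = {1, 3, 5})
    (h7 : A 6 = {1, 3, 5, 6}) (h8 : A 7 = {1, 3, 6}) (h9 : A 8 = {1, 3, 4, 6})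
    (h10 : A 9 = {1, 4, 6}) (h11 : A 10 = {1, 2, 4, 6}) (h12 : A 11 = {2, 4, 6}) :
    (∀ i : Fin 12, ((A (i - 1)) \ (A i) ∪ (A i) \ (A (i - 1))).card = 1) ∧
      RSep 6 3 (A 0) (A 4) ∧ RSep 6 3 (A 0) (A 8) ∧ RSep 6 3 (A 4) (A 8) := by
  refine ⟨?_, ?_, ?_, ?_⟩
  · intro i
    fin_cases i
    · show (A 11 \ A 0 ∪ A 0 \ A 11).card = 1
      rw [h12, h1]; decide
    · show (A 0 \ A 1 ∪ A 1 \ A 0).card = 1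
      rw [h1, h2]; decide
    · show (A 1 \ A 2 ∪ A 2 \ A 1).card = 1
      rw [h2, h3]; decide
    · show (A 2 \ A 3 ∪ A 3 \ A 2).card = 1
      rw [h3, h4]; decide
    · show (A 3 \ A 4 ∪ A 4 \ A 3).card = 1
      rw [h4, h5]; decide
    · show (A 4 \ A 5 ∪ A 5 \ A 4).card = 1
      rw [h5, h6]; decide
    · show (A 5 \ A 6 ∪ A 6 \ A 5).card = 1
      rw [h6, h7]; decide
    · show (A 6 \ A 7 ∪ A 7 \ A 6).card = 1
      rw [h7, h8]; decide
    · show (A 7 \ A 8 ∪ A 8 \ A 7).card = 1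
      rw [h8, h9]; decide
    · show (A 8 \ A 9 ∪ A 9 \ A 8).card = 1
      rw [h9, h10]; decide
    · show (A 9 \ A 10 ∪ A 10 \ A 9).card = 1
      rw [h10, h11]; decide
    · show (A 10 \ A 11 ∪ A 11 \ A 10).card = 1
      rw [h11, h12]; decide
  · rintro ⟨f, hf, hIcc, hcase⟩
    rw [h1, h5] at hcase
    rcases hcase with ⟨he, ho⟩ | ⟨he, ho⟩ <;>
      exact no3 _ (by decide) f hf (he 0 rfl) (he 2 rfl) (he 4 rfl)
  · rintro ⟨f, hf, hIcc, hcase⟩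
    rw [h1, h9] at hcase
    rcases hcase with ⟨he, ho⟩ | ⟨he, ho⟩
    · exact no3 _ (by decide) f hf (he 0 rfl) (he 2 rfl) (he 4 rfl)
    · exact no2 _ (by decide) f hf (ho 1 rfl) (ho 3 rfl)
  · rintro ⟨f, hf, hIcc, hcase⟩
    rw [h5, h9] at hcase
    rcases hcase with ⟨he, ho⟩ | ⟨he, ho⟩
    · exact no3 _ (by decide) f hf (he 0 rfl) (he 2 rfl) (he 4 rfl)
    · exact no2 _ (by decide) f hf (ho 1 rfl) (ho 3 rfl)
end

section
/- Let S ⊆ 2^[6] consist of all intervals of [6] together with all unions of two intervals that contain 1 or 6. Then S is 3-separated and |S| = 52. -/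
open Finset

/- ### Auxiliary setup -/

def rng : Finset (ℕ × ℕ) := Finset.Icc 1 6 ×ˢ Finset.Icc 1 6

def L : Finset (Finset ℕ) :=
  {(∅ : Finset ℕ), {1}, {2}, {3}, {4}, {5}, {6}, {1,2}, {1,3}, {1,4}, {1,5}, {1,6}, {2,3}, {2,6}, {3,4}, {3,6}, {4,5}, {4,6}, {5,6}, {1,2,3}, {1,2,4}, {1,2,5}, {1,2,6}, {1,3,4}, {1,4,5}, {1,5,6}, {2,3,4}, {2,3,6}, {2,5,6}, {3,4,5}, {3,4,6}, {3,5,6}, {4,5,6}, {1,2,3,4}, {1,2,3,5}, {1,2,3,6}, {1,2,4,5}, {1,2,5,6}, {1,3,4,5}, {1,4,5,6}, {2,3,4,5}, {2,3,4,6}, {2,3,5,6}, {2,4,5,6}, {3,4,5,6}, {1,2,3,4,5}, {1,2,3,4,6}, {1,2,3,5,6}, {1,2,4,5,6}, {1,3,4,5,6}, {2,3,4,5,6}, {1,2,3,4,5,6}}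

def Cort1 (X : Finset ℕ) : Prop := X = ∅ ∨ ∃ p ∈ rng, X = Finset.Icc p.1 p.2

def Cort2 (X : Finset ℕ) : Prop :=
  X = ∅ ∨ ∃ p ∈ rng, ∃ q ∈ rng, X = Finset.Icc p.1 p.2 ∪ Finset.Icc q.1 q.2

instance : DecidablePred Cort1 := fun X => by unfold Cort1; infer_instance
instance : DecidablePred Cort2 := fun X => by unfold Cort2; infer_instance

def Bad (A B : Finset ℕ) : Prop :=
  (∃ a ∈ A\B, ∃ b ∈ B\A, a < b ∧ ∃ c ∈ A\B, b < c ∧ ∃ d ∈ B\A, c < d ∧ ∃ e ∈ A\B, d < e) ∨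
  (∃ a ∈ B\A, ∃ b ∈ A\B, a < b ∧ ∃ c ∈ B\A, b < c ∧ ∃ d ∈ A\B, c < d ∧ ∃ e ∈ B\A, d < e)

instance : ∀ A B, Decidable (Bad A B) := fun A B => by unfold Bad; infer_instance

/- ### decided facts -/

set_option maxRecDepth 1000000 in
set_option maxHeartbeats 4000000 in
lemma key1 : ∀ p ∈ rng, Finset.Icc p.1 p.2 ∈ L := by decide

set_option maxRecDepth 1000000 in
set_option maxHeartbeats 10000000 in
lemma key2 : ∀ p ∈ rng, ∀ q ∈ rng,
    (1 ∈ Finset.Icc p.1 p.2 ∪ Finset.Icc q.1 q.2 ∨ 6 ∈ Finset.Icc p.1 p.2 ∪ Finset.Icc q.1 q.2) →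
    Finset.Icc p.1 p.2 ∪ Finset.Icc q.1 q.2 ∈ L := by decide

set_option maxRecDepth 1000000 in
set_option maxHeartbeats 10000000 in
lemma key3 : ∀ X ∈ L, X ⊆ Finset.Icc 1 6 ∧ (Cort1 X ∨ (Cort2 X ∧ (1 ∈ X ∨ 6 ∈ X))) := by
  decide

set_option maxRecDepth 1000000 in
set_option maxHeartbeats 40000000 in
lemma key4 : ∀ A ∈ L, ∀ B ∈ L, ¬ Bad A B := by decide

set_option maxRecDepth 10000 in
lemma key5 : (∅ : Finset ℕ) ∈ L ∧ L.card = 52 := by decide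

/- ### cortege characterisation -/

lemma cort_aux {k : ℕ} {X : Finset ℕ} (hX : X ⊆ Finset.Icc 1 6) (h : IsCortege k X) :
    ∃ s : Finset (ℕ × ℕ), s.card ≤ k ∧ (∀ p ∈ s, p ∈ rng) ∧
      X = s.biUnion fun p => Finset.Icc p.1 p.2 := by
  obtain ⟨s, hc, hXs⟩ := h
  refine ⟨s.filter (fun p => p.1 ≤ p.2), le_trans (Finset.card_filter_le _ _) hc, ?_, ?_⟩
  · intro p hp
    rw [Finset.mem_filter] at hp
    have h1 : p.1 ∈ X := by
      rw [hXs]; exact Finset.mem_biUnion.2 ⟨p, hp.1, Finset.mem_Icc.2 ⟨le_refl _, hp.2⟩⟩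
    have h2 : p.2 ∈ X := by
      rw [hXs]; exact Finset.mem_biUnion.2 ⟨p, hp.1, Finset.mem_Icc.2 ⟨hp.2, le_refl _⟩⟩
    have g1 := Finset.mem_Icc.1 (hX h1)
    have g2 := Finset.mem_Icc.1 (hX h2)
    simp only [rng, Finset.mem_product, Finset.mem_Icc]
    exact ⟨g1, g2⟩
  · ext x
    rw [hXs]
    simp only [Finset.mem_biUnion, Finset.mem_filter, Finset.mem_Icc]
    constructor
    · rintro ⟨p, hp, h1, h2⟩; exact ⟨p, ⟨hp, le_trans h1 h2⟩, h1, h2⟩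
    · rintro ⟨p, ⟨hp, _⟩, h1, h2⟩; exact ⟨p, hp, h1, h2⟩

lemma cort1_iff {X : Finset ℕ} (hX : X ⊆ Finset.Icc 1 6) : IsCortege 1 X ↔ Cort1 X := by
  constructor
  · intro h
    obtain ⟨s, hc, hr, hXs⟩ := cort_aux hX h
    rcases s.eq_empty_or_nonempty with rfl | ⟨p, hp⟩
    · left; simp [hXs]
    · have hs : s = {p} := by
        apply Finset.eq_singleton_iff_unique_mem.2
        exact ⟨hp, fun b hb => Finset.card_le_one.1 hc b hb p hp⟩
      right
      exact ⟨p, hr p hp, by rw [hXs, hs, Finset.singleton_biUnion]⟩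
  · rintro (rfl | ⟨p, _, rfl⟩)
    · exact ⟨∅, by simp⟩
    · exact ⟨{p}, by simp⟩

lemma cort2_iff {X : Finset ℕ} (hX : X ⊆ Finset.Icc 1 6) : IsCortege 2 X ↔ Cort2 X := by
  constructor
  · intro h
    obtain ⟨s, hc, hr, hXs⟩ := cort_aux hX h
    rcases s.eq_empty_or_nonempty with rfl | ⟨p, hp⟩
    · left; simp [hXs]
    · right
      have hps : s = insert p (s.erase p) := (Finset.insert_erase hp).symm
      have hce : (s.erase p).card ≤ 1 := by
        have := Finset.card_erase_of_mem hp
        omega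
      rcases (s.erase p).eq_empty_or_nonempty with he | ⟨q, hq⟩
      · refine ⟨p, hr p hp, p, hr p hp, ?_⟩
        rw [hXs, hps, he]
        simp
      · have hqs : s.erase p = {q} := by
          apply Finset.eq_singleton_iff_unique_mem.2
          exact ⟨hq, fun b hb => Finset.card_le_one.1 hce b hb q hq⟩
        refine ⟨p, hr p hp, q, hr q (Finset.mem_of_mem_erase hq), ?_⟩
        rw [hXs, hps, hqs, Finset.biUnion_insert, Finset.singleton_biUnion]
  · rintro (rfl | ⟨p, _, q, _, rfl⟩)
    · exact ⟨∅, by simp⟩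
    · refine ⟨{p, q}, ?_, ?_⟩
      · exact le_trans (Finset.card_insert_le _ _) (by simp)
      · rw [Finset.biUnion_insert, Finset.singleton_biUnion]

/- ### AltViol characterisation -/

lemma bad_half {A B : Finset ℕ} (hA : A ⊆ Finset.Icc 1 6) (hB : B ⊆ Finset.Icc 1 6)
    (h : ∃ a ∈ A\B, ∃ b ∈ B\A, a < b ∧ ∃ c ∈ A\B, b < c ∧ ∃ d ∈ B\A, c < d ∧ ∃ e ∈ A\B, d < e) :
    ∃ f : Fin 5 → ℕ, StrictMono f ∧ (∀ k, f k ∈ Finset.Icc 1 6) ∧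
      (∀ k : Fin 5, (k : ℕ) % 2 = 0 → f k ∈ A \ B) ∧
      (∀ k : Fin 5, (k : ℕ) % 2 = 1 → f k ∈ B \ A) := by
  obtain ⟨a, ha, b, hb, hab, c, hc, hbc, d, hd, hcd, e, he, hde⟩ := h
  refine ⟨![a, b, c, d, e], ?_, ?_, ?_, ?_⟩
  · rw [Fin.strictMono_iff_lt_succ]
    intro i
    fin_cases i <;> simpa using by assumption
  · intro k
    fin_cases k <;> simp only [Matrix.cons_val_zero, Matrix.cons_val_one, Matrix.head_cons,
      Matrix.cons_val_two, Matrix.tail_cons, Matrix.cons_val_three, Matrix.cons_val_four]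
    · exact hA (Finset.mem_sdiff.1 ha).1
    · exact hB (Finset.mem_sdiff.1 hb).1
    · exact hA (Finset.mem_sdiff.1 hc).1
    · exact hB (Finset.mem_sdiff.1 hd).1
    · exact hA (Finset.mem_sdiff.1 he).1
  · intro k hk
    fin_cases k <;> simp_all
  · intro k hk
    fin_cases k <;> simp_all

lemma altViol_iff {A B : Finset ℕ} (hA : A ⊆ Finset.Icc 1 6) (hB : B ⊆ Finset.Icc 1 6) :
    AltViol 6 3 A B ↔ Bad A B := by
  constructor
  · rintro ⟨f, hm, _, (⟨h1, h2⟩ | ⟨h1, h2⟩)⟩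
    · exact Or.inl ⟨f 0, h1 0 (by decide), f 1, h2 1 (by decide), hm (by decide),
        f 2, h1 2 (by decide), hm (by decide), f 3, h2 3 (by decide), hm (by decide),
        f 4, h1 4 (by decide), hm (by decide)⟩
    · exact Or.inr ⟨f 0, h1 0 (by decide), f 1, h2 1 (by decide), hm (by decide),
        f 2, h1 2 (by decide), hm (by decide), f 3, h2 3 (by decide), hm (by decide),
        f 4, h1 4 (by decide), hm (by decide)⟩
  · rintro (h | h)
    · obtain ⟨f, h1, h2, h3, h4⟩ := bad_half hA hB h
      exact ⟨f, h1, h2, Or.inl ⟨h3, h4⟩⟩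
    · obtain ⟨f, h1, h2, h3, h4⟩ := bad_half hB hA h
      exact ⟨f, h1, h2, Or.inr ⟨h3, h4⟩⟩

theorem stmt11 (S : Finset (Finset ℕ))
    (hS : ∀ X : Finset ℕ, X ∈ S ↔ X ⊆ Finset.Icc 1 6 ∧
      (IsCortege 1 X ∨ (IsCortege 2 X ∧ (1 ∈ X ∨ 6 ∈ X)))) :
    RSepColl 6 3 S ∧ S.card = 52 := by
  have hSL : S = L := by
    ext X
    rw [hS X]
    constructor
    · rintro ⟨hsub, h1 | ⟨h2, h16⟩⟩
      · rcases (cort1_iff hsub).1 h1 with rfl | ⟨p, hp, rfl⟩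
        · exact key5.1
        · exact key1 p hp
      · rcases (cort2_iff hsub).1 h2 with rfl | ⟨p, hp, q, hq, rfl⟩
        · exact key5.1
        · exact key2 p hp q hq h16
    · intro hX
      obtain ⟨hsub, h⟩ := key3 X hX
      refine ⟨hsub, ?_⟩
      rcases h with h1 | ⟨h2, h16⟩
      · exact Or.inl ((cort1_iff hsub).2 h1)
      · exact Or.inr ⟨(cort2_iff hsub).2 h2, h16⟩
  subst hSL
  refine ⟨?_, key5.2⟩
  intro A hA B hB hv
  exact key4 A hA B hB ((altViol_iff (key3 A hA).1 (key3 B hB).1).1 hv)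
end

section
/- The collection A consisting of all intervals of [6], all unions of two intervals containing 1 or 6, and the three sets {2,4}, {3,5}, {1,3,4,6}, is a maximal 3-separated collection in 2^[6] of size 55; in particular, since there exists a 3-separated collection in 2^[6] of size 57 = C(6,0)+C(6,1)+C(6,2)+C(6,3)+C(6,4), maximal 3-separated collections in 2^[6] do not all have the same size. -/
open Finset

/-! ### Auxiliary machinery -/

def blocks (X : Finset ℕ) : ℕ := (X.filter fun i => i - 1 ∉ X).card

lemma blocks_le_of_cortege {k : ℕ} {X : Finset ℕ} (h0 : 0 ∉ X) (h : IsCortege k X) :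
    blocks X ≤ k := by
  obtain ⟨s, hsk, rfl⟩ := h
  have hsubset : ((s.biUnion fun p => Finset.Icc p.1 p.2).filter
      fun i => i - 1 ∉ s.biUnion fun p => Finset.Icc p.1 p.2) ⊆ s.image Prod.fst := by
    intro i hi
    simp only [Finset.mem_filter] at hi
    obtain ⟨hiX, hi1⟩ := hi
    rw [Finset.mem_biUnion] at hiX
    obtain ⟨p, hp, hip⟩ := hiX
    rw [Finset.mem_Icc] at hip
    have hi0 : i ≠ 0 := by
      rintro rfl
      exact h0 (Finset.mem_biUnion.mpr ⟨p, hp, Finset.mem_Icc.mpr hip⟩)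
    have hpi : p.1 = i := by
      by_contra hne
      exact hi1 (Finset.mem_biUnion.mpr ⟨p, hp, Finset.mem_Icc.mpr ⟨by omega, by omega⟩⟩)
    exact Finset.mem_image.mpr ⟨p, hp, hpi⟩
  exact le_trans (le_trans (Finset.card_le_card hsubset) Finset.card_image_le) hsk

lemma cortege_of_blocks : ∀ X : Finset ℕ, 0 ∉ X → IsCortege (blocks X) X := by
  intro X
  induction X using Finset.strongInduction with
  | _ X ih =>
  intro h0
  rcases X.eq_empty_or_nonempty with rfl | hne
  · exact ⟨∅, by simp⟩
  obtain ⟨a, haX, hamin⟩ : ∃ a ∈ X, ∀ x ∈ X, a ≤ x :=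
    ⟨X.min' hne, X.min'_mem hne, fun x => X.min'_le x⟩
  have hE : (X.filter fun n => n + 1 ∉ X).Nonempty := by
    refine ⟨X.max' hne, Finset.mem_filter.mpr ⟨X.max'_mem hne, fun hc => ?_⟩⟩
    have := X.le_max' _ hc; omega
  obtain ⟨b, hbmem, hbmin⟩ : ∃ b ∈ X.filter fun n => n + 1 ∉ X,
      ∀ x ∈ X.filter fun n => n + 1 ∉ X, b ≤ x :=
    ⟨_, Finset.min'_mem _ hE, fun x => Finset.min'_le _ x⟩
  obtain ⟨hbX, hb1⟩ := Finset.mem_filter.mp hbmem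
  have hab : a ≤ b := hamin b hbX
  have hIcc : ∀ j, a + j ≤ b → a + j ∈ X := by
    intro j
    induction j with
    | zero => intro _; simpa using haX
    | succ j ihj =>
      intro hj
      have h1 : a + j ∈ X := ihj (by omega)
      by_contra hc
      have hc' : (a + j) + 1 ∉ X := fun hcc => hc hcc
      have := hbmin _ (Finset.mem_filter.mpr ⟨h1, hc'⟩)
      omega
  have hsub : Finset.Icc a b ⊆ X := by
    intro m hm
    rw [Finset.mem_Icc] at hm
    have := hIcc (m - a) (by omega)
    have hma : a + (m - a) = m := by omega
    rwa [hma] at this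
  have ha0 : a ≠ 0 := fun hc => h0 (hc ▸ haX)
  have ha1 : a - 1 ∉ X := by
    intro hc
    have := hamin _ hc
    omega
  have hastart : a ∈ X.filter fun i => i - 1 ∉ X := Finset.mem_filter.mpr ⟨haX, ha1⟩
  have hX'ss : X \ Finset.Icc a b ⊂ X :=
    Finset.sdiff_ssubset hsub ⟨a, Finset.mem_Icc.mpr ⟨le_refl _, hab⟩⟩
  have h0' : 0 ∉ X \ Finset.Icc a b := fun h => h0 (Finset.mem_sdiff.mp h).1
  obtain ⟨s', hs'c, hs'⟩ := ih _ hX'ss h0'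
  have hkey : blocks (X \ Finset.Icc a b) + 1 ≤ blocks X := by
    have hsub2 : ((X \ Finset.Icc a b).filter fun i => i - 1 ∉ X \ Finset.Icc a b) ⊆
        (X.filter fun i => i - 1 ∉ X).erase a := by
      intro i hi
      rw [Finset.mem_filter, Finset.mem_sdiff, Finset.mem_Icc] at hi
      obtain ⟨⟨hiX, hiab⟩, hi1⟩ := hi
      have hi0 : i ≠ 0 := fun hc => h0 (hc ▸ hiX)
      have hia : a ≤ i := hamin _ hiX
      have hib : b < i := by omega
      refine Finset.mem_erase.mpr ⟨by omega, Finset.mem_filter.mpr ⟨hiX, ?_⟩⟩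
      intro hc
      apply hi1
      rw [Finset.mem_sdiff, Finset.mem_Icc]
      refine ⟨hc, ?_⟩
      rintro ⟨_, hc2⟩
      have hieq : i = b + 1 := by omega
      exact hb1 (hieq ▸ hiX)
    have h1 := Finset.card_le_card hsub2
    rw [Finset.card_erase_of_mem hastart] at h1
    have h2 : 1 ≤ (X.filter fun i => i - 1 ∉ X).card := Finset.card_pos.mpr ⟨a, hastart⟩
    unfold blocks at *
    omega
  refine ⟨insert (a, b) s', ?_, ?_⟩
  · calc (insert (a, b) s').card ≤ s'.card + 1 := Finset.card_insert_le _ _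
      _ ≤ blocks (X \ Finset.Icc a b) + 1 := by omega
      _ ≤ blocks X := hkey
  · rw [Finset.biUnion_insert, ← hs']
    ext x
    simp only [Finset.mem_union, Finset.mem_sdiff]
    constructor
    · intro hx
      by_cases hxab : x ∈ Finset.Icc a b
      · exact Or.inl hxab
      · exact Or.inr ⟨hx, hxab⟩
    · rintro (hx | ⟨hx, _⟩)
      · exact hsub hx
      · exact hx

lemma isCortege_iff {k : ℕ} {X : Finset ℕ} (h0 : 0 ∉ X) :
    IsCortege k X ↔ blocks X ≤ k := by
  refine ⟨blocks_le_of_cortege h0, fun h => ?_⟩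
  obtain ⟨s, hc, hX⟩ := cortege_of_blocks X h0
  exact ⟨s, le_trans hc h, hX⟩

/-! ### Bool version of violations -/

def L6 : List ℕ := [1, 2, 3, 4, 5, 6]

def alt (A B : Finset ℕ) : Bool :=
  L6.any fun a => decide (a ∈ A) && !decide (a ∈ B) &&
    (L6.any fun b => decide (a < b) && decide (b ∈ B) && !decide (b ∈ A) &&
      (L6.any fun c => decide (b < c) && decide (c ∈ A) && !decide (c ∈ B) &&
        (L6.any fun d => decide (c < d) && decide (d ∈ B) && !decide (d ∈ A) &&
          (L6.any fun e => decide (d < e) && decide (e ∈ A) && !decide (e ∈ B)))))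

def Vb (A B : Finset ℕ) : Bool := alt A B || alt B A

lemma mem_L6 {a : ℕ} : a ∈ L6 ↔ 1 ≤ a ∧ a ≤ 6 := by
  simp [L6]; omega

lemma alt_iff (A B : Finset ℕ) : alt A B = true ↔
    ∃ a b c d e : ℕ, 1 ≤ a ∧ a < b ∧ b < c ∧ c < d ∧ d < e ∧ e ≤ 6 ∧
      a ∈ A ∧ a ∉ B ∧ b ∈ B ∧ b ∉ A ∧ c ∈ A ∧ c ∉ B ∧ d ∈ B ∧ d ∉ A ∧ e ∈ A ∧ e ∉ B := by
  simp only [alt, List.any_eq_true, Bool.and_eq_true, Bool.not_eq_true', decide_eq_true_eq,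
    decide_eq_false_iff_not, mem_L6]
  constructor
  · rintro ⟨a, ⟨ha1, ha6⟩, ⟨haA, haB⟩, b, ⟨hb1, hb6⟩, ⟨⟨hab, hbB⟩, hbA⟩,
      c, ⟨hc1, hc6⟩, ⟨⟨hbc, hcA⟩, hcB⟩, d, ⟨hd1, hd6⟩, ⟨⟨hcd, hdB⟩, hdA⟩,
      e, ⟨he1, he6⟩, ⟨⟨hde, heA⟩, heB⟩⟩
    exact ⟨a, b, c, d, e, ha1, hab, hbc, hcd, hde, he6,
      haA, haB, hbB, hbA, hcA, hcB, hdB, hdA, heA, heB⟩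
  · rintro ⟨a, b, c, d, e, ha1, hab, hbc, hcd, hde, he6,
      haA, haB, hbB, hbA, hcA, hcB, hdB, hdA, heA, heB⟩
    exact ⟨a, ⟨ha1, by omega⟩, ⟨haA, haB⟩, b, ⟨by omega, by omega⟩, ⟨⟨hab, hbB⟩, hbA⟩,
      c, ⟨by omega, by omega⟩, ⟨⟨hbc, hcA⟩, hcB⟩, d, ⟨by omega, by omega⟩, ⟨⟨hcd, hdB⟩, hdA⟩,
      e, ⟨by omega, he6⟩, ⟨⟨hde, heA⟩, heB⟩⟩

lemma strictMono5 {a b c d e : ℕ} (h1 : a < b) (h2 : b < c) (h3 : c < d) (h4 : d < e) :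
    StrictMono ![a, b, c, d, e] := by
  intro i j hij
  fin_cases i <;> fin_cases j <;> simp_all <;> omega

lemma altViol_iff_s13 (A B : Finset ℕ) : AltViol 6 3 A B ↔ Vb A B = true := by
  constructor
  · rintro ⟨f, hm, hmem, h⟩
    have h01 : (0 : Fin 5) < 1 := by decide
    have h12 : (1 : Fin 5) < 2 := by decide
    have h23 : (2 : Fin 5) < 3 := by decide
    have h34 : (3 : Fin 5) < 4 := by decide
    have m0 := Finset.mem_Icc.mp (hmem (0 : Fin 5))
    have m4 := Finset.mem_Icc.mp (hmem (4 : Fin 5))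
    rw [Vb, Bool.or_eq_true]
    rcases h with ⟨he, ho⟩ | ⟨he, ho⟩
    · left
      rw [alt_iff]
      have e0 := Finset.mem_sdiff.mp (he (0 : Fin 5) (by decide))
      have e2 := Finset.mem_sdiff.mp (he (2 : Fin 5) (by decide))
      have e4 := Finset.mem_sdiff.mp (he (4 : Fin 5) (by decide))
      have o1 := Finset.mem_sdiff.mp (ho (1 : Fin 5) (by decide))
      have o3 := Finset.mem_sdiff.mp (ho (3 : Fin 5) (by decide))
      exact ⟨_, _, _, _, _, m0.1, hm h01, hm h12, hm h23, hm h34, m4.2,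
        e0.1, e0.2, o1.1, o1.2, e2.1, e2.2, o3.1, o3.2, e4.1, e4.2⟩
    · right
      rw [alt_iff]
      have e0 := Finset.mem_sdiff.mp (he (0 : Fin 5) (by decide))
      have e2 := Finset.mem_sdiff.mp (he (2 : Fin 5) (by decide))
      have e4 := Finset.mem_sdiff.mp (he (4 : Fin 5) (by decide))
      have o1 := Finset.mem_sdiff.mp (ho (1 : Fin 5) (by decide))
      have o3 := Finset.mem_sdiff.mp (ho (3 : Fin 5) (by decide))
      exact ⟨_, _, _, _, _, m0.1, hm h01, hm h12, hm h23, hm h34, m4.2,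
        e0.1, e0.2, o1.1, o1.2, e2.1, e2.2, o3.1, o3.2, e4.1, e4.2⟩
  · intro hv
    rw [Vb, Bool.or_eq_true] at hv
    rcases hv with hv | hv
    · rw [alt_iff] at hv
      obtain ⟨a, b, c, d, e, ha1, hab, hbc, hcd, hde, he6,
        haA, haB, hbB, hbA, hcA, hcB, hdB, hdA, heA, heB⟩ := hv
      refine ⟨![a, b, c, d, e], strictMono5 hab hbc hcd hde, ?_, Or.inl ⟨?_, ?_⟩⟩
      · intro k
        fin_cases k <;> simp [Finset.mem_Icc] <;> omega
      · intro k hk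
        fin_cases k <;> simp_all [Finset.mem_sdiff]
      · intro k hk
        fin_cases k <;> simp_all [Finset.mem_sdiff]
    · rw [alt_iff] at hv
      obtain ⟨a, b, c, d, e, ha1, hab, hbc, hcd, hde, he6,
        haB, haA, hbA, hbB, hcB, hcA, hdA, hdB, heB, heA⟩ := hv
      refine ⟨![a, b, c, d, e], strictMono5 hab hbc hcd hde, ?_, Or.inr ⟨?_, ?_⟩⟩
      · intro k
        fin_cases k <;> simp [Finset.mem_Icc] <;> omega
      · intro k hk
        fin_cases k <;> simp_all [Finset.mem_sdiff]
      · intro k hk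
        fin_cases k <;> simp_all [Finset.mem_sdiff]

/-! ### The explicit collections -/

def S0 : Finset (Finset ℕ) := (Finset.Icc 1 6).powerset.filter fun X =>
  blocks X ≤ 1 ∨ (blocks X ≤ 2 ∧ (1 ∈ X ∨ 6 ∈ X)) ∨ X = {2, 4} ∨ X = {3, 5} ∨ X = {1, 3, 4, 6}

def T0 : Finset (Finset ℕ) := (Finset.Icc 1 6).powerset.filter fun X => blocks X ≤ 2

set_option maxRecDepth 200000
set_option maxHeartbeats 4000000

lemma S0_card : S0.card = 55 := by decide
lemma T0_card : T0.card = 57 := by decide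
lemma S0_sep : ∀ A ∈ S0, ∀ B ∈ S0, Vb A B = false := by decide
lemma T0_sep : ∀ A ∈ T0, ∀ B ∈ T0, Vb A B = false := by decide
lemma S0_max : ∀ B ∈ (Finset.Icc 1 6).powerset, B ∉ S0 → ∃ A ∈ S0, Vb A B = true := by decide
lemma T0_max : ∀ B ∈ (Finset.Icc 1 6).powerset, B ∉ T0 → ∃ A ∈ T0, Vb A B = true := by decide

lemma maxSep_of (W : Finset (Finset ℕ))
    (hsep : ∀ A ∈ W, ∀ B ∈ W, Vb A B = false)
    (hmax : ∀ B ∈ (Finset.Icc 1 6).powerset, B ∉ W → ∃ A ∈ W, Vb A B = true)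
    (hsub : ∀ X ∈ W, X ⊆ Finset.Icc 1 6) :
    MaxSep 6 3 W := by
  refine ⟨hsub, ?_, ?_⟩
  · intro A hA B hB hviol
    have := (altViol_iff_s13 A B).mp hviol
    rw [hsep A hA B hB] at this
    exact Bool.false_ne_true this
  · intro B hB hBW hcoll
    obtain ⟨A, hA, hV⟩ := hmax B (Finset.mem_powerset.mpr hB) hBW
    exact hcoll A (Finset.mem_insert_of_mem hA) B (Finset.mem_insert_self _ _)
      ((altViol_iff_s13 A B).mpr hV)

theorem stmt13 (S : Finset (Finset ℕ))
    (hS : ∀ X : Finset ℕ, X ∈ S ↔ X ⊆ Finset.Icc 1 6 ∧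
      (IsCortege 1 X ∨ (IsCortege 2 X ∧ (1 ∈ X ∨ 6 ∈ X)) ∨
        X = {2, 4} ∨ X = {3, 5} ∨ X = {1, 3, 4, 6})) :
    MaxSep 6 3 S ∧ S.card = 55 ∧
      (∃ T : Finset (Finset ℕ), (∀ X ∈ T, X ⊆ Finset.Icc 1 6) ∧
        RSepColl 6 3 T ∧ T.card = 57) ∧
      ∃ S₁ S₂ : Finset (Finset ℕ), MaxSep 6 3 S₁ ∧ MaxSep 6 3 S₂ ∧
        S₁.card ≠ S₂.card := by
  have hS0 : S = S0 := by
    ext X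
    rw [hS, S0, Finset.mem_filter, Finset.mem_powerset]
    constructor
    · rintro ⟨h1, h2⟩
      have h0 : 0 ∉ X := fun hc => by simpa using h1 hc
      rw [isCortege_iff h0, isCortege_iff h0] at h2
      exact ⟨h1, h2⟩
    · rintro ⟨h1, h2⟩
      have h0 : 0 ∉ X := fun hc => by simpa using h1 hc
      rw [← isCortege_iff h0 (k := 1), ← isCortege_iff h0 (k := 2)] at h2
      exact ⟨h1, h2⟩
  have hS0sub : ∀ X ∈ S0, X ⊆ Finset.Icc 1 6 := by
    intro X hX
    exact Finset.mem_powerset.mp (Finset.mem_filter.mp hX).1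
  have hT0sub : ∀ X ∈ T0, X ⊆ Finset.Icc 1 6 := by
    intro X hX
    exact Finset.mem_powerset.mp (Finset.mem_filter.mp hX).1
  have hMS : MaxSep 6 3 S0 := maxSep_of S0 S0_sep S0_max hS0sub
  have hMT : MaxSep 6 3 T0 := maxSep_of T0 T0_sep T0_max hT0sub
  subst hS0
  refine ⟨hMS, S0_card, ⟨T0, hT0sub, hMT.2.1, T0_card⟩,
    S0, T0, hMS, hMT, by rw [S0_card, T0_card]; omega⟩
end

section
/- Let A ⊆ 2^[n], let n' = n+1, and let A' = { X ∪ {n'} : X ∈ A }. Then A is (d−1)-separated if and only if A ∪ A' is d-separated (as a collection in 2^[n+1]). -/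
open Finset

lemma reduce_aux {n : ℕ} {A₀ B₀ A' B' : Finset ℕ}
    (hA : A' = A₀ ∨ A' = insert (n+1) A₀) (hB : B' = B₀ ∨ B' = insert (n+1) B₀) :
    ∀ x ∈ A' \ B', x ≤ n → x ∈ A₀ \ B₀ := by
  intro x hx hle
  have hne : x ≠ n+1 := by omega
  rw [mem_sdiff] at hx ⊢
  obtain ⟨hxA, hxB⟩ := hx
  constructor
  · rcases hA with rfl | rfl
    · exact hxA
    · rcases mem_insert.1 hxA with h | h
      · exact absurd h hne
      · exact h
  · rcases hB with rfl | rfl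
    · exact hxB
    · exact fun h => hxB (mem_insert_of_mem h)

lemma restrict_viol {n e : ℕ} {X' Y' X Y : Finset ℕ}
    (hX : ∀ x ∈ X', x ≤ n → x ∈ X) (hY : ∀ x ∈ Y', x ≤ n → x ∈ Y)
    (g : Fin (e+3) → ℕ) (hmono : StrictMono g)
    (hIcc : ∀ k, g k ∈ Finset.Icc 1 (n+1))
    (hE : ∀ k : Fin (e+3), (k:ℕ) % 2 = 0 → g k ∈ X')
    (hO : ∀ k : Fin (e+3), (k:ℕ) % 2 = 1 → g k ∈ Y') :
    ∃ f : Fin (e+2) → ℕ, StrictMono f ∧ (∀ k, f k ∈ Finset.Icc 1 n) ∧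
      (∀ k : Fin (e+2), (k:ℕ) % 2 = 0 → f k ∈ X) ∧
      (∀ k : Fin (e+2), (k:ℕ) % 2 = 1 → f k ∈ Y) := by
  have hle : ∀ k : Fin (e+2), g k.castSucc ≤ n := by
    intro k
    have h2 := mem_Icc.1 (hIcc (Fin.last (e+2)))
    have hlt : g k.castSucc < g (Fin.last (e+2)) := hmono (Fin.castSucc_lt_last k)
    omega
  refine ⟨fun k => g k.castSucc, ?_, ?_, ?_, ?_⟩
  · intro i j hij
    exact hmono (Fin.castSucc_lt_castSucc_iff.2 hij)
  · intro k
    have h1 := mem_Icc.1 (hIcc k.castSucc)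
    have := hle k
    simp only [mem_Icc]
    omega
  · intro k hk
    exact hX _ (hE k.castSucc (by simpa using hk)) (hle k)
  · intro k hk
    exact hY _ (hO k.castSucc (by simpa using hk)) (hle k)

lemma ext_viol {n e : ℕ} {X Y X' Y' : Finset ℕ}
    (f : Fin (e+2) → ℕ) (hmono : StrictMono f) (hIcc : ∀ k, f k ∈ Finset.Icc 1 n)
    (hX : ∀ k : Fin (e+2), (k:ℕ) % 2 = 0 → f k ∈ X)
    (hY : ∀ k : Fin (e+2), (k:ℕ) % 2 = 1 → f k ∈ Y)
    (hXX : X ⊆ X') (hYY : Y ⊆ Y')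
    (hlast : (e % 2 = 0 ∧ n+1 ∈ X') ∨ (e % 2 = 1 ∧ n+1 ∈ Y')) :
    ∃ g : Fin (e+3) → ℕ, StrictMono g ∧ (∀ k, g k ∈ Finset.Icc 1 (n+1)) ∧
      (∀ k : Fin (e+3), (k:ℕ) % 2 = 0 → g k ∈ X') ∧
      (∀ k : Fin (e+3), (k:ℕ) % 2 = 1 → g k ∈ Y') := by
  refine ⟨fun k => if h : (k:ℕ) < e+2 then f ⟨k, h⟩ else n+1, ?_, ?_, ?_, ?_⟩
  · intro i j hij
    have hij' : (i:ℕ) < (j:ℕ) := hij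
    have hj3 : (j:ℕ) < e+3 := j.isLt
    by_cases hi : (i:ℕ) < e+2 <;> by_cases hj : (j:ℕ) < e+2
    · simp only [dif_pos hi, dif_pos hj]
      exact hmono (Fin.mk_lt_mk.2 hij')
    · simp only [dif_pos hi, dif_neg hj]
      have := (mem_Icc.1 (hIcc ⟨i, hi⟩)).2
      omega
    · omega
    · omega
  · intro k
    by_cases hk : (k:ℕ) < e+2
    · simp only [dif_pos hk]
      have := mem_Icc.1 (hIcc ⟨k, hk⟩)
      rw [mem_Icc]; omega
    · simp only [dif_neg hk]
      rw [mem_Icc]; omega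
  · intro k hk
    by_cases h : (k:ℕ) < e+2
    · simp only [dif_pos h]; exact hXX (hX ⟨k, h⟩ hk)
    · simp only [dif_neg h]
      have hk2 : (k:ℕ) = e+2 := by have := k.isLt; omega
      rcases hlast with ⟨he, hm⟩ | ⟨he, hm⟩
      · exact hm
      · omega
  · intro k hk
    by_cases h : (k:ℕ) < e+2
    · simp only [dif_pos h]; exact hYY (hY ⟨k, h⟩ hk)
    · simp only [dif_neg h]
      have hk2 : (k:ℕ) = e+2 := by have := k.isLt; omega
      rcases hlast with ⟨he, hm⟩ | ⟨he, hm⟩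
      · omega
      · exact hm

theorem stmt15 (n d : ℕ) (hd : 1 ≤ d) (S : Finset (Finset ℕ))
    (hS : ∀ X ∈ S, X ⊆ Finset.Icc 1 n) :
    RSepColl n (d - 1) S ↔
      RSepColl (n + 1) d (S ∪ S.image (insert (n + 1))) := by
  obtain ⟨e, rfl⟩ : ∃ e, d = e + 1 := ⟨d - 1, by omega⟩
  simp only [Nat.add_sub_cancel]
  have memS' : ∀ X ∈ S ∪ S.image (insert (n+1)),
      ∃ X₀ ∈ S, (X = X₀ ∨ X = insert (n+1) X₀) := by
    intro X hX
    rcases mem_union.1 hX with h | h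
    · exact ⟨X, h, Or.inl rfl⟩
    · obtain ⟨X₀, hX₀, rfl⟩ := mem_image.1 h
      exact ⟨X₀, hX₀, Or.inr rfl⟩
  constructor
  · intro hsep A' hA' B' hB' hviol
    obtain ⟨A₀, hA₀, hAc⟩ := memS' A' hA'
    obtain ⟨B₀, hB₀, hBc⟩ := memS' B' hB'
    obtain ⟨g, hmono, hIcc, hor⟩ := hviol
    refine hsep A₀ hA₀ B₀ hB₀ ?_
    rcases hor with ⟨hE, hO⟩ | ⟨hE, hO⟩
    · obtain ⟨f, h1, h2, h3, h4⟩ :=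
        restrict_viol (reduce_aux hAc hBc) (reduce_aux hBc hAc) g hmono hIcc hE hO
      exact ⟨f, h1, h2, Or.inl ⟨h3, h4⟩⟩
    · obtain ⟨f, h1, h2, h3, h4⟩ :=
        restrict_viol (reduce_aux hBc hAc) (reduce_aux hAc hBc) g hmono hIcc hE hO
      exact ⟨f, h1, h2, Or.inr ⟨h3, h4⟩⟩
  · intro hsep A hA B hB hviol
    obtain ⟨f, hmono, hIcc, hor⟩ := hviol
    have hAn : (n+1) ∉ A := fun h => by have := mem_Icc.1 (hS A hA h); omega
    have hBn : (n+1) ∉ B := fun h => by have := mem_Icc.1 (hS B hB h); omega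
    have hAS' : A ∈ S ∪ S.image (insert (n+1)) := mem_union_left _ hA
    have hBS' : B ∈ S ∪ S.image (insert (n+1)) := mem_union_left _ hB
    have hA'S' : insert (n+1) A ∈ S ∪ S.image (insert (n+1)) :=
      mem_union_right _ (mem_image_of_mem _ hA)
    have hB'S' : insert (n+1) B ∈ S ∪ S.image (insert (n+1)) :=
      mem_union_right _ (mem_image_of_mem _ hB)
    have hsub1 : ∀ {P Q : Finset ℕ}, P \ Q ⊆ insert (n+1) P \ Q := by
      intro P Q x hx
      rw [mem_sdiff] at hx ⊢
      exact ⟨mem_insert_of_mem hx.1, hx.2⟩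
    have hsub2 : ∀ {P Q : Finset ℕ}, (n+1) ∉ P → P \ Q ⊆ P \ insert (n+1) Q := by
      intro P Q hP x hx
      rw [mem_sdiff] at hx ⊢
      refine ⟨hx.1, fun h => ?_⟩
      rcases mem_insert.1 h with rfl | h
      · exact hP hx.1
      · exact hx.2 h
    have hmem : ∀ {P Q : Finset ℕ}, (n+1) ∉ Q → (n+1) ∈ insert (n+1) P \ Q :=
      fun hQ => mem_sdiff.2 ⟨mem_insert_self _ _, hQ⟩
    rcases hor with ⟨hE, hO⟩ | ⟨hE, hO⟩ <;>
      rcases Nat.mod_two_eq_zero_or_one e with he | he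
    · obtain ⟨g, h1, h2, h3, h4⟩ :=
        ext_viol f hmono hIcc hE hO hsub1 (hsub2 hBn) (Or.inl ⟨he, hmem hBn⟩)
      exact hsep _ hA'S' B hBS' ⟨g, h1, h2, Or.inl ⟨h3, h4⟩⟩
    · obtain ⟨g, h1, h2, h3, h4⟩ :=
        ext_viol f hmono hIcc hE hO (hsub2 hAn) hsub1 (Or.inr ⟨he, hmem hAn⟩)
      exact hsep A hAS' _ hB'S' ⟨g, h1, h2, Or.inl ⟨h3, h4⟩⟩
    · obtain ⟨g, h1, h2, h3, h4⟩ :=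
        ext_viol f hmono hIcc hE hO hsub1 (hsub2 hAn) (Or.inl ⟨he, hmem hAn⟩)
      exact hsep A hAS' _ hB'S' ⟨g, h1, h2, Or.inr ⟨h3, h4⟩⟩
    · obtain ⟨g, h1, h2, h3, h4⟩ :=
        ext_viol f hmono hIcc hE hO (hsub2 hBn) hsub1 (Or.inr ⟨he, hmem hBn⟩)
      exact hsep _ hA'S' B hBS' ⟨g, h1, h2, Or.inr ⟨h3, h4⟩⟩
end
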